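/- If there exists a tight SCCD(v,k,b) with an outer expansion set, then there exists an economical SCCD(v+2, k, b + 2v/(k−1) + 1). -/

import Mathlib

/-!
Adjoin two new points `x`, `y`. The expansion set `E` partitions `X` into `r = v/(k-1)` unchanged
subsets; for each `S ∈ E` the blocks `S ∪ {x}`, `S ∪ {y}` cover the new pairs through `S`, and they
can be spliced into the chain wherever `S` is unchanged: between `B i` and `B (i+1)` if
`S = B i ∩ B (i+1)`, or at an end of the design; distinct members of `E` get distinct positions.
The outer member `S0 = U₀` is spliced in before `B 0` as `S0 ∪ {y}, (S0 \ {z}) ∪ {x, y}, S0 ∪ {x}`,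
whose middle block covers `{x, y}`. This adds `2r + 1` blocks, and since
`g₁(v+2,k) = g₁(v,k) + 2r + 1/(k-1)`, a tight design becomes an economical one.
A `U_b` in `E` becomes a `U₀` after reversing the design.
-/

/-- A single change covering design `SCCD(v,k,b)`: a ground set `X` of size `v`
together with blocks `B 0, …, B (b-1)`, each a `k`-subset of `X`, such that
consecutive blocks share exactly `k-1` elements and every pair of distinct
elements of `X` occurs together in some block. -/
structure SCCD (v k b : ℕ) where
  X : Finset ℕ
  B : ℕ → Finset ℕ
  cardX : X.card = v
  cardB : ∀ i, i < b → (B i).card = k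
  subX : ∀ i, i < b → B i ⊆ X
  singleChange : ∀ i, i + 1 < b → (B i ∩ B (i + 1)).card = k - 1
  covers : ∀ x ∈ X, ∀ y ∈ X, x ≠ y → ∃ i, i < b ∧ x ∈ B i ∧ y ∈ B i

/-- A circular single change covering design: additionally the last and first
blocks share exactly `k-1` elements. -/
structure CSCCD (v k b : ℕ) extends SCCD v k b where
  circ : 0 < b → (toSCCD.B (b - 1) ∩ toSCCD.B 0).card = k - 1

/-- `g₁(v,k) = (C(v,2) − C(k,2))/(k−1) + 1`, the linear lower bound. -/
def g1 (v k : ℕ) : ℚ := ((v.choose 2 : ℚ) - (k.choose 2 : ℚ)) / ((k : ℚ) - 1) + 1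

/-- `g₂(v,k) = C(v,2)/(k−1)`, the circular lower bound. -/
def g2 (v k : ℕ) : ℚ := (v.choose 2 : ℚ) / ((k : ℚ) - 1)

/-- The excess of a (linear) `SCCD(v,k,b)`: `e = (k−1)b + C(k−1,2) − C(v,2)`. -/
def linExcess (v k b : ℕ) : ℤ :=
  ((k - 1 : ℕ) : ℤ) * b + ((k - 1).choose 2 : ℤ) - (v.choose 2 : ℤ)

/-- The excess of a circular `CSCCD(v,k,b)`: `e = (k−1)b − C(v,2)`. -/
def circExcess (v k b : ℕ) : ℤ :=
  ((k - 1 : ℕ) : ℤ) * b - (v.choose 2 : ℤ)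

/-- An `SCCD(v,k,b)` is economical when `b = ⌈g₁(v,k)⌉`. -/
def EconomicalLin (v k b : ℕ) : Prop := (b : ℤ) = ⌈g1 v k⌉

/-- An `SCCD(v,k,b)` is tight when `b = g₁(v,k)` (in particular `g₁` is an integer). -/
def TightLin (v k b : ℕ) : Prop := (b : ℚ) = g1 v k

/-- A `CSCCD(v,k,b)` is economical when `b = ⌈g₂(v,k)⌉`. -/
def EconomicalCirc (v k b : ℕ) : Prop := (b : ℤ) = ⌈g2 v k⌉

/-- A `CSCCD(v,k,b)` is tight when `b = g₂(v,k)` (in particular `g₂` is an integer). -/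
def TightCirc (v k b : ℕ) : Prop := (b : ℚ) = g2 v k

namespace SCCD

variable {v k b : ℕ}

/-- The set of elements introduced in block `i`: all of `B 0` for `i = 0`,
and `B i \ B (i-1)` otherwise. -/
def introduced (D : SCCD v k b) (i : ℕ) : Finset ℕ :=
  if i = 0 then D.B 0 else D.B i \ D.B (i - 1)

/-- The pair `s` is covered on block `i`. -/
def coveredOn (D : SCCD v k b) (i : ℕ) (s : Finset ℕ) : Prop :=
  i < b ∧ s.card = 2 ∧ s ⊆ D.B i ∧ (s ∩ D.introduced i).Nonempty

/-- The excess of block `i`: the number of pairs covered on `B i` that are also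
covered on some earlier block. -/
noncomputable def blockExcess (D : SCCD v k b) (i : ℕ) : ℕ :=
  {s : Finset ℕ | D.coveredOn i s ∧ ∃ j < i, D.coveredOn j s}.ncard

/-- Block `i` is tight: no pair covered on it is covered on any other block. -/
def TightBlock (D : SCCD v k b) (i : ℕ) : Prop :=
  ∀ s, D.coveredOn i s → ∀ j, j < b → j ≠ i → ¬ D.coveredOn j s

/-- `S` is an inner unchanged subset, i.e. the intersection of two
consecutive blocks. -/
def IsInnerUnchanged (D : SCCD v k b) (S : Finset ℕ) : Prop :=
  ∃ i, i + 1 < b ∧ S = D.B i ∩ D.B (i + 1)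

/-- `S` may serve as the outer unchanged subset `U₀`: a `(k−1)`-subset of the
first block. -/
def IsU0 (D : SCCD v k b) (S : Finset ℕ) : Prop :=
  0 < b ∧ S ⊆ D.B 0 ∧ S.card = k - 1

/-- `S` may serve as the outer unchanged subset `U_b`: a `(k−1)`-subset of the
last block. -/
def IsUb (D : SCCD v k b) (S : Finset ℕ) : Prop :=
  0 < b ∧ S ⊆ D.B (b - 1) ∧ S.card = k - 1

/-- `S` is an unchanged subset (inner, or one of the outer choices). -/
def IsUnchanged (D : SCCD v k b) (S : Finset ℕ) : Prop :=
  D.IsInnerUnchanged S ∨ D.IsU0 S ∨ D.IsUb S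

/-- `E` is an expansion set: `v/(k−1)` pairwise disjoint unchanged subsets
whose union is `X`. -/
def IsExpansionSet (D : SCCD v k b) (E : Finset (Finset ℕ)) : Prop :=
  E.card = v / (k - 1) ∧ (∀ S ∈ E, D.IsUnchanged S) ∧
  (E : Set (Finset ℕ)).Pairwise Disjoint ∧ E.sup id = D.X

/-- `E` is an outer expansion set: it contains `U₀` or `U_b`. -/
def IsOuterExpansionSet (D : SCCD v k b) (E : Finset (Finset ℕ)) : Prop :=
  D.IsExpansionSet E ∧ ((∃ S ∈ E, D.IsU0 S) ∨ (∃ S ∈ E, D.IsUb S))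

/-- `E` is an outer expansion set containing both `U₀` and `U_b`. -/
def IsDoubleOuterExpansionSet (D : SCCD v k b) (E : Finset (Finset ℕ)) : Prop :=
  D.IsExpansionSet E ∧ (∃ S ∈ E, D.IsU0 S) ∧ (∃ S ∈ E, D.IsUb S)

/-- `E` is a disjoint-capable outer expansion set: it contains both `U₀` and
`U_b`, `U₀ = U₁ = ⋯ = U_{k−1}`, and `U_b = ⋃_{i=1}^{k−1} (B_i \ B_{i+1})`
(written here with blocks indexed from `0`). -/
def IsDisjointCapable (D : SCCD v k b) (E : Finset (Finset ℕ)) : Prop :=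
  D.IsExpansionSet E ∧ k ≤ b ∧
  ∃ S0 ∈ E, ∃ Sb ∈ E, D.IsU0 S0 ∧ D.IsUb Sb ∧
    (∀ i, i < k - 1 → S0 = D.B i ∩ D.B (i + 1)) ∧
    Sb = (Finset.range (k - 1)).biUnion (fun i => D.B i \ D.B (i + 1))

end SCCD

namespace CSCCD

variable {v k b : ℕ}

/-- `S` is an unchanged subset of a circular design (indices taken mod `b`). -/
def IsUnchanged (D : CSCCD v k b) (S : Finset ℕ) : Prop :=
  (∃ i, i + 1 < b ∧ S = D.toSCCD.B i ∩ D.toSCCD.B (i + 1)) ∨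
  (0 < b ∧ S = D.toSCCD.B (b - 1) ∩ D.toSCCD.B 0)

/-- `E` is an expansion set of a circular design. -/
def IsExpansionSet (D : CSCCD v k b) (E : Finset (Finset ℕ)) : Prop :=
  E.card = v / (k - 1) ∧ (∀ S ∈ E, D.IsUnchanged S) ∧
  (E : Set (Finset ℕ)).Pairwise Disjoint ∧ E.sup id = D.toSCCD.X

end CSCCD

namespace Finset

variable {α : Type*} [DecidableEq α] {k : ℕ} {B S T U : Finset α}

theorem union_eq_of_card_eq_pred (hT : T ⊆ B) (hU : U ⊆ B) (hB : B.card = k)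
    (hTc : T.card = k - 1) (hUc : U.card = k - 1) (hTU : T ≠ U) : T ∪ U = B := by
  have hUT : ¬U ⊆ T := fun h => hTU (eq_of_subset_of_card_le h (by omega)).symm
  have hlt : T.card < (T ∪ U).card :=
    card_lt_card (ssubset_of_subset_of_ne subset_union_left fun h => hUT (h ▸ subset_union_right))
  exact eq_of_subset_of_card_le (union_subset hT hU) (by omega)

theorem eq_of_disjoint_of_card_eq_pred (hS : S ⊆ B) (hT : T ⊆ B) (hU : U ⊆ B)
    (hB : B.card = k) (hSc : S.card = k - 1) (hTc : T.card = k - 1) (hUc : U.card = k - 1)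
    (hST : Disjoint S T) (hTU : T ≠ U) : S = U := by
  have hTUB : T ∪ U = B := union_eq_of_card_eq_pred hT hU hB hTc hUc hTU
  have hSU : S ⊆ U := hST.left_le_of_le_sup_left (hTUB.symm ▸ hS : S ⊆ T ∪ U)
  exact eq_of_subset_of_card_le hSU (by omega)

theorem inter_insert_of_subset {a : α} (ha : a ∉ B) (hS : S ⊆ B) : B ∩ insert a S = S := by
  rw [inter_insert_of_notMem ha, inter_eq_right.mpr hS]

theorem insert_inter_of_subset {a : α} (ha : a ∉ B) (hS : S ⊆ B) : insert a S ∩ B = S := by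
  rw [inter_comm, inter_insert_of_subset ha hS]

end Finset

namespace List

theorem isChain_flatMap_range {α : Type*} {R : α → α → Prop} {n : ℕ} {f : ℕ → List α}
    (hne : ∀ i < n, f i ≠ []) (hf : ∀ i < n, (f i).IsChain R)
    (hjoin : ∀ i, i + 1 < n → ∀ a ∈ (f i).getLast?, ∀ c ∈ (f (i + 1)).head?, R a c) :
    ((range n).flatMap f).IsChain R := by
  rw [flatMap_def, isChain_flatten (by simpa using hne), isChain_map, isChain_range]
  simp only [mem_map, mem_range, forall_exists_index, and_imp, forall_apply_eq_imp_iff₂]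
  exact ⟨hf, fun m hm => hjoin m (by omega)⟩

end List

def SingleChange (k : ℕ) (A C : Finset ℕ) : Prop := (A ∩ C).card = k - 1

theorem g1_add_two (v k : ℕ) : g1 (v + 2) k = g1 v k + (2 * v + 1) / ((k : ℚ) - 1) := by
  have h : ((v + 2).choose 2 : ℚ) = v.choose 2 + 2 * v + 1 := by
    have : (v + 2).choose 2 = v.choose 2 + 2 * v + 1 := by
      simp [Nat.choose_succ_succ, Nat.choose_one_right]
      ring
    exact_mod_cast this
  rw [g1, g1, h]
  ring

theorem economicalLin_of_tightLin {v k b : ℕ} (hk : 2 ≤ k) (hdvd : k - 1 ∣ v)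
    (hD : TightLin v k b) : EconomicalLin (v + 2) k (b + 2 * (v / (k - 1)) + 1) := by
  obtain ⟨r, rfl⟩ := hdvd
  have hK : (1 : ℚ) ≤ (k : ℚ) - 1 := by
    have : (2 : ℚ) ≤ k := by exact_mod_cast hk
    linarith
  have hstep : (2 * ((k - 1) * r : ℕ) + 1 : ℚ) / ((k : ℚ) - 1) = 2 * r + 1 / ((k : ℚ) - 1) := by
    rw [Nat.cast_mul, Nat.cast_sub (by omega)]
    field_simp
    ring
  rw [EconomicalLin, g1_add_two, ← hD, hstep, Nat.mul_div_cancel_left r (by omega),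
    eq_comm, Int.ceil_eq_iff]
  have h0 : 0 < 1 / ((k : ℚ) - 1) := by positivity
  have h1 : 1 / ((k : ℚ) - 1) ≤ 1 := (div_le_one (by linarith)).mpr hK
  push_cast
  constructor <;> linarith

namespace SCCD

variable {v k b : ℕ}

theorem nonempty_of_isChain (X : Finset ℕ) (L : List (Finset ℕ)) (hX : X.card = v)
    (hL : L.length = b) (hblock : ∀ C ∈ L, C.card = k ∧ C ⊆ X)
    (hchain : L.IsChain (SingleChange k))
    (hcover : ∀ p ∈ X, ∀ q ∈ X, p ≠ q → ∃ C ∈ L, p ∈ C ∧ q ∈ C) : Nonempty (SCCD v k b) := by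
  subst hL
  refine ⟨⟨X, fun i => L.getD i ∅, hX, fun i hi => ?_, fun i hi => ?_, fun i hi => ?_, ?_⟩⟩
  · rw [List.getD_eq_getElem _ _ hi]
    exact (hblock _ (L.getElem_mem hi)).1
  · rw [List.getD_eq_getElem _ _ hi]
    exact (hblock _ (L.getElem_mem hi)).2
  · rw [List.getD_eq_getElem _ _ (by omega), List.getD_eq_getElem _ _ hi]
    exact List.isChain_iff_getElem.mp hchain i hi
  · intro p hp q hq hpq
    obtain ⟨C, hC, hpC, hqC⟩ := hcover p hp q hq hpq
    obtain ⟨i, hi, rfl⟩ := List.getElem_of_mem hC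
    exact ⟨i, hi, by rwa [List.getD_eq_getElem _ _ hi], by rwa [List.getD_eq_getElem _ _ hi]⟩

def reverse (D : SCCD v k b) : SCCD v k b where
  X := D.X
  B i := D.B (b - 1 - i)
  cardX := D.cardX
  cardB _ _ := D.cardB _ (by omega)
  subX _ _ := D.subX _ (by omega)
  singleChange i hi := by
    rw [Finset.inter_comm, show b - 1 - i = b - 2 - i + 1 by omega,
      show b - 1 - (i + 1) = b - 2 - i by omega]
    exact D.singleChange _ (by omega)
  covers p hp q hq hpq := by
    obtain ⟨i, hi, hpi, hqi⟩ := D.covers p hp q hq hpq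
    have hii : b - 1 - (b - 1 - i) = i := by omega
    exact ⟨b - 1 - i, by omega, by rwa [hii], by rwa [hii]⟩

theorem reverse_B (D : SCCD v k b) (i : ℕ) : D.reverse.B i = D.B (b - 1 - i) := rfl

theorem IsUb.isU0_reverse {D : SCCD v k b} {S : Finset ℕ} (h : D.IsUb S) :
    D.reverse.IsU0 S :=
  ⟨h.1, by simpa [reverse_B] using h.2.1, h.2.2⟩

theorem IsUnchanged.card_eq {D : SCCD v k b} {S : Finset ℕ} (h : D.IsUnchanged S) :
    S.card = k - 1 := by
  rcases h with ⟨i, hi, rfl⟩ | ⟨-, -, h⟩ | ⟨-, -, h⟩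
  exacts [D.singleChange i hi, h, h]

namespace IsExpansionSet

variable {D : SCCD v k b} {E : Finset (Finset ℕ)} {S : Finset ℕ}

theorem reverse (hE : D.IsExpansionSet E) : D.reverse.IsExpansionSet E := by
  obtain ⟨hcard, hunch, hdisj, hsup⟩ := hE
  refine ⟨hcard, fun S hS => ?_, hdisj, hsup⟩
  rcases hunch S hS with ⟨i, hi, rfl⟩ | ⟨hb, hsub, hc⟩ | h
  · refine Or.inl ⟨b - 2 - i, by omega, ?_⟩
    rw [reverse_B, reverse_B, show b - 1 - (b - 2 - i) = i + 1 by omega,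
      show b - 1 - (b - 2 - i + 1) = i by omega, Finset.inter_comm]
  · exact Or.inr (Or.inr ⟨hb, by rwa [reverse_B, show b - 1 - (b - 1) = 0 by omega], hc⟩)
  · exact Or.inr (Or.inl h.isU0_reverse)

theorem isUnchanged (hE : D.IsExpansionSet E) (hS : S ∈ E) : D.IsUnchanged S :=
  hE.2.1 S hS

theorem disjoint (hE : D.IsExpansionSet E) {T : Finset ℕ} (hS : S ∈ E) (hT : T ∈ E)
    (hST : S ≠ T) : Disjoint S T :=
  hE.2.2.1 hS hT hST

theorem subset_X (hE : D.IsExpansionSet E) (hS : S ∈ E) : S ⊆ D.X :=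
  hE.2.2.2 ▸ Finset.le_sup (f := id) hS

theorem exists_mem_of_mem_X (hE : D.IsExpansionSet E) {p : ℕ} (hp : p ∈ D.X) : ∃ S ∈ E, p ∈ S :=
  Finset.mem_sup.mp (hE.2.2.2.symm ▸ hp : p ∈ E.sup id)

theorem card_eq (hE : D.IsExpansionSet E) (hS : S ∈ E) : S.card = k - 1 :=
  (hE.isUnchanged hS).card_eq

theorem card_X (hE : D.IsExpansionSet E) : v = E.card * (k - 1) := by
  rw [← D.cardX, ← hE.2.2.2, Finset.sup_eq_biUnion, Finset.card_biUnion (t := id) hE.2.2.1,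
    Finset.sum_congr rfl fun S hS => (hE.card_eq hS : (id S).card = k - 1), Finset.sum_const,
    smul_eq_mul]

theorem two_le (hE : D.IsExpansionSet E) (hne : E.Nonempty) : 2 ≤ k := by
  by_contra! hk
  have h := hE.1
  rw [show k - 1 = 0 by omega, Nat.div_zero] at h
  exact hne.card_pos.ne' h

end IsExpansionSet

variable (D : SCCD v k b) {S : Finset ℕ}

open Classical in
/-- The gap `j ≤ b` at which the blocks `S ∪ {x}`, `S ∪ {y}` are spliced in: between `B (j - 1)`
and `B j`, where `j = 0` and `j = b` are the two ends of the design. -/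
noncomputable def gap (S : Finset ℕ) : ℕ :=
  if h : D.IsInnerUnchanged S then h.choose + 1 else if S ⊆ D.B 0 then 0 else b

theorem gap_spec (S : Finset ℕ) :
    (∃ i, i + 1 < b ∧ S = D.B i ∩ D.B (i + 1) ∧ D.gap S = i + 1) ∨
      (¬D.IsInnerUnchanged S ∧ S ⊆ D.B 0 ∧ D.gap S = 0) ∨
      (¬D.IsInnerUnchanged S ∧ ¬S ⊆ D.B 0 ∧ D.gap S = b) := by
  unfold gap
  split_ifs with hin h0
  · exact Or.inl ⟨hin.choose, hin.choose_spec.1, hin.choose_spec.2, rfl⟩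
  · exact Or.inr (Or.inl ⟨hin, h0, rfl⟩)
  · exact Or.inr (Or.inr ⟨hin, h0, rfl⟩)

theorem gap_le (S : Finset ℕ) : D.gap S ≤ b := by
  rcases D.gap_spec S with ⟨i, hi, -, h⟩ | ⟨-, -, h⟩ | ⟨-, -, h⟩ <;> omega

variable {D}

theorem eq_inter_of_gap_eq_succ {i : ℕ} (h : D.gap S = i + 1) (hi : i + 1 < b) :
    S = D.B i ∩ D.B (i + 1) := by
  rcases D.gap_spec S with ⟨j, -, hS, hj⟩ | ⟨-, -, h0⟩ | ⟨-, -, hb⟩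
  · obtain rfl : j = i := by omega
    exact hS
  all_goals omega

theorem not_isInnerUnchanged_of_gap_eq (h : D.gap S = b) : ¬D.IsInnerUnchanged S := by
  rcases D.gap_spec S with ⟨j, hj, -, hg⟩ | ⟨hin, -⟩ | ⟨hin, -⟩
  · omega
  all_goals exact hin

theorem IsUnchanged.subset_of_gap_eq_zero (hS : D.IsUnchanged S) (h : D.gap S = 0) :
    S ⊆ D.B 0 := by
  rcases D.gap_spec S with ⟨j, -, -, hj⟩ | ⟨-, h0, -⟩ | ⟨-, -, hb⟩
  · omega
  · exact h0
  · rcases hS with ⟨i, hi, -⟩ | ⟨hb0, -⟩ | ⟨hb0, -⟩ <;> omega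

theorem IsUnchanged.subset_of_gap_eq_succ {i : ℕ} (hS : D.IsUnchanged S)
    (h : D.gap S = i + 1) : S ⊆ D.B i := by
  rcases D.gap_spec S with ⟨j, -, rfl, hj⟩ | ⟨-, -, h0⟩ | ⟨hin, h0, hb⟩
  · obtain rfl : j = i := by omega
    exact Finset.inter_subset_left
  · omega
  · rcases hS with hin' | ⟨-, h0', -⟩ | ⟨-, hb', -⟩
    · exact absurd hin' hin
    · exact absurd h0' h0
    · rwa [show b - 1 = i by omega] at hb'

variable {E : Finset (Finset ℕ)} {S0 : Finset ℕ}

/-- Members `S ≠ T` of `E` sharing a gap would be disjoint `(k-1)`-subsets of one block, which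
also contains a `(k-1)`-subset `U ≠ T` (`S0` at the front, the last inner unchanged subset at the
back); this forces `S = U`, although `S ≠ S0` and `S` is not inner unchanged there. -/
theorem IsExpansionSet.injOn_gap (hE : D.IsExpansionSet E) (hU0 : D.IsU0 S0) :
    Set.InjOn D.gap (E.erase S0) := by
  intro S hS T hT hST
  obtain ⟨hSS0, hSE⟩ := Finset.mem_erase.mp hS
  obtain ⟨hTS0, hTE⟩ := Finset.mem_erase.mp hT
  by_contra hne
  have key : ∀ m < b, S ⊆ D.B m → T ⊆ D.B m → ∀ U ⊆ D.B m, U.card = k - 1 → T ≠ U → S = U :=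
    fun m hm hSm hTm U hUm hUc hTU => Finset.eq_of_disjoint_of_card_eq_pred hSm hTm hUm
      (D.cardB m hm) (hE.card_eq hSE) (hE.card_eq hTE) hUc (hE.disjoint hSE hTE hne) hTU
  have hfront : S ⊆ D.B 0 → T ⊆ D.B 0 → False := fun hS0' hT0 =>
    hSS0 (key 0 hU0.1 hS0' hT0 S0 hU0.2.1 hU0.2.2 hTS0)
  obtain hg0 | ⟨i, hgi⟩ : D.gap S = 0 ∨ ∃ i, D.gap S = i + 1 :=
    (D.gap S).eq_zero_or_eq_succ_pred.imp id fun h => ⟨_, h⟩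
  · exact hfront ((hE.isUnchanged hSE).subset_of_gap_eq_zero hg0)
      ((hE.isUnchanged hTE).subset_of_gap_eq_zero (hST ▸ hg0))
  have hSi := (hE.isUnchanged hSE).subset_of_gap_eq_succ hgi
  have hTi := (hE.isUnchanged hTE).subset_of_gap_eq_succ (hST ▸ hgi)
  rcases Nat.lt_or_ge (i + 1) b with hi | hi
  · exact hne ((eq_inter_of_gap_eq_succ hgi hi).trans (eq_inter_of_gap_eq_succ (hST ▸ hgi) hi).symm)
  obtain rfl | ⟨j, rfl⟩ : i = 0 ∨ ∃ j, i = j + 1 := i.eq_zero_or_eq_succ_pred.imp id fun h => ⟨_, h⟩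
  · exact hfront hSi hTi
  have hb : D.gap S = b := by have := D.gap_le S; omega
  have hinner : ∀ A, A = D.B j ∩ D.B (j + 1) → D.IsInnerUnchanged A :=
    fun A hA => ⟨j, by omega, hA⟩
  refine not_isInnerUnchanged_of_gap_eq hb (hinner S (key (j + 1) (by omega) hSi hTi _
    Finset.inter_subset_right (D.singleChange j (by omega)) fun hTU => ?_))
  exact not_isInnerUnchanged_of_gap_eq (hST ▸ hb) (hinner T hTU)

variable (D E S0) (x y z : ℕ)

noncomputable def gapBlocks (j : ℕ) : List (Finset ℕ) :=
  ((E.erase S0).filter (D.gap · = j)).toList.flatMap fun S => [insert x S, insert y S]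

noncomputable def expandedBlocks : List (Finset ℕ) :=
  D.gapBlocks E S0 x y 0 ++ [insert y S0, insert x (insert y (S0.erase z)), insert x S0] ++
    (List.range b).flatMap fun i => D.B i :: D.gapBlocks E S0 x y (i + 1)

variable {D E S0 x y z}

theorem mem_gapBlocks {j : ℕ} {C : Finset ℕ} :
    C ∈ D.gapBlocks E S0 x y j ↔
      ∃ S ∈ E.erase S0, D.gap S = j ∧ (C = insert x S ∨ C = insert y S) := by
  simp [gapBlocks, and_assoc]

theorem length_gapBlocks (j : ℕ) :
    (D.gapBlocks E S0 x y j).length = 2 * ((E.erase S0).filter (D.gap · = j)).card := by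
  simp [gapBlocks, mul_comm]

theorem gapBlocks_eq (hinj : Set.InjOn D.gap (E.erase S0)) (j : ℕ) :
    D.gapBlocks E S0 x y j = [] ∨
      ∃ S ∈ E.erase S0, D.gap S = j ∧ D.gapBlocks E S0 x y j = [insert x S, insert y S] := by
  have hF : ((E.erase S0).filter (D.gap · = j)).card ≤ 1 :=
    Finset.card_le_one.mpr fun S hS T hT =>
      hinj (Finset.mem_filter.mp hS).1 (Finset.mem_filter.mp hT).1
        ((Finset.mem_filter.mp hS).2.trans (Finset.mem_filter.mp hT).2.symm)
  rcases Nat.le_one_iff_eq_zero_or_eq_one.mp hF with h | h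
  · left
    simp [gapBlocks, Finset.card_eq_zero.mp h]
  · obtain ⟨S, hS⟩ := Finset.card_eq_one.mp h
    obtain ⟨hSE, hSj⟩ := Finset.mem_filter.mp (hS ▸ Finset.mem_singleton_self S)
    exact Or.inr ⟨S, hSE, hSj, by simp [gapBlocks, hS]⟩

theorem length_expandedBlocks (hE : D.IsExpansionSet E) (hS0 : S0 ∈ E) :
    (D.expandedBlocks E S0 x y z).length = b + 2 * (v / (k - 1)) + 1 := by
  have hfib := Finset.card_eq_sum_card_fiberwise (f := D.gap) (s := E.erase S0)
    (t := Finset.range (b + 1)) fun S _ => Finset.mem_range.mpr (Nat.lt_succ_of_le (D.gap_le S))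
  rw [Finset.card_erase_of_mem hS0, hE.1, Finset.sum_range_succ'] at hfib
  have hpos : 0 < v / (k - 1) := hE.1 ▸ Finset.card_pos.mpr ⟨S0, hS0⟩
  have hsum (g : ℕ → ℕ) : ((List.range b).map g).sum = ∑ i ∈ Finset.range b, g i := by
    simp [Finset.sum, Finset.range, Multiset.range]
  simp only [expandedBlocks, List.length_append, List.length_flatMap, List.length_cons,
    List.length_nil, length_gapBlocks, hsum, Finset.sum_add_distrib, ← Finset.mul_sum,
    Finset.sum_const, Finset.card_range, smul_eq_mul]
  omega

theorem mem_expandedBlocks (hS0 : S0 ∈ E) {C : Finset ℕ}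
    (hC : C ∈ D.expandedBlocks E S0 x y z) :
    (∃ i < b, C = D.B i) ∨ (∃ S ∈ E, C = insert x S ∨ C = insert y S) ∨
      C = insert x (insert y (S0.erase z)) := by
  have hgap {j : ℕ} (hC : C ∈ D.gapBlocks E S0 x y j) :
      ∃ S ∈ E, C = insert x S ∨ C = insert y S :=
    let ⟨S, hS, _, hC⟩ := mem_gapBlocks.mp hC
    ⟨S, Finset.mem_of_mem_erase hS, hC⟩
  simp only [expandedBlocks, List.mem_append, List.mem_cons, List.mem_flatMap, List.mem_range,
    List.not_mem_nil, or_false] at hC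
  rcases hC with (hC | rfl | rfl | rfl) | ⟨i, hi, rfl | hC⟩
  · exact Or.inr (Or.inl (hgap hC))
  · exact Or.inr (Or.inl ⟨S0, hS0, .inr rfl⟩)
  · exact Or.inr (Or.inr rfl)
  · exact Or.inr (Or.inl ⟨S0, hS0, .inl rfl⟩)
  · exact Or.inl ⟨i, hi, rfl⟩
  · exact Or.inr (Or.inl (hgap hC))

theorem mem_expandedBlocks_of_mem_gapBlocks {j : ℕ} {C : Finset ℕ} (hj : j ≤ b)
    (hC : C ∈ D.gapBlocks E S0 x y j) : C ∈ D.expandedBlocks E S0 x y z := by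
  rcases j with _ | i
  · simp [expandedBlocks, hC]
  · simp only [expandedBlocks, List.mem_append, List.mem_flatMap, List.mem_range, List.mem_cons]
    exact Or.inr ⟨i, by omega, Or.inr hC⟩

theorem insert_mem_expandedBlocks (hS0 : S0 ∈ E) {S : Finset ℕ} (hS : S ∈ E) :
    insert x S ∈ D.expandedBlocks E S0 x y z ∧ insert y S ∈ D.expandedBlocks E S0 x y z := by
  by_cases hSS0 : S = S0
  · subst hSS0
    simp [expandedBlocks]
  have hS' : S ∈ E.erase S0 := Finset.mem_erase.mpr ⟨hSS0, hS⟩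
  exact ⟨mem_expandedBlocks_of_mem_gapBlocks (D.gap_le S)
      (mem_gapBlocks.mpr ⟨S, hS', rfl, .inl rfl⟩),
    mem_expandedBlocks_of_mem_gapBlocks (D.gap_le S) (mem_gapBlocks.mpr ⟨S, hS', rfl, .inr rfl⟩)⟩

theorem card_eq_and_subset_of_mem_expandedBlocks (hE : D.IsExpansionSet E) (hS0 : S0 ∈ E)
    (hx : x ∉ D.X) (hy : y ∉ D.X) (hxy : x ≠ y) (hz : z ∈ S0) {C : Finset ℕ}
    (hC : C ∈ D.expandedBlocks E S0 x y z) : C.card = k ∧ C ⊆ insert x (insert y D.X) := by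
  have hk := hE.two_le ⟨S0, hS0⟩
  have hXY : D.X ⊆ insert y D.X := Finset.subset_insert _ _
  rcases mem_expandedBlocks hS0 hC with ⟨i, hi, rfl⟩ | ⟨S, hS, rfl | rfl⟩ | rfl
  · exact ⟨D.cardB i hi, (D.subX i hi).trans (hXY.trans (Finset.subset_insert _ _))⟩
  · refine ⟨?_, Finset.insert_subset_insert _ ((hE.subset_X hS).trans hXY)⟩
    rw [Finset.card_insert_of_notMem fun h => hx (hE.subset_X hS h), hE.card_eq hS]
    omega
  · refine ⟨?_, (Finset.insert_subset_insert _ (hE.subset_X hS)).trans (Finset.subset_insert _ _)⟩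
    rw [Finset.card_insert_of_notMem fun h => hy (hE.subset_X hS h), hE.card_eq hS]
    omega
  · have hzX : S0.erase z ⊆ D.X := (Finset.erase_subset z S0).trans (hE.subset_X hS0)
    refine ⟨?_, Finset.insert_subset_insert _ (Finset.insert_subset_insert _ hzX)⟩
    rw [Finset.card_insert_of_notMem, Finset.card_insert_of_notMem fun h => hy (hzX h),
      Finset.card_erase_of_mem hz, hE.card_eq hS0]
    · omega
    · simpa [hxy] using fun h => hx (hzX h)

theorem isChain_segment (hE : D.IsExpansionSet E) (hU0 : D.IsU0 S0) (hx : x ∉ D.X)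
    (hxy : x ≠ y) {i : ℕ} (hi : i < b) :
    (D.B i :: D.gapBlocks E S0 x y (i + 1)).IsChain (SingleChange k) := by
  rcases gapBlocks_eq (x := x) (y := y) (hE.injOn_gap hU0) (i + 1) with h | ⟨S, hS, hgap, h⟩
  · rw [h]
    exact List.isChain_singleton _
  have hSE := Finset.mem_of_mem_erase hS
  have hSX := hE.subset_X hSE
  rw [h, List.isChain_cons_cons, List.isChain_pair, SingleChange, SingleChange,
    Finset.inter_insert_of_subset (fun h => hx (D.subX i hi h))
      ((hE.isUnchanged hSE).subset_of_gap_eq_succ hgap),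
    Finset.insert_inter_of_subset (by simpa [hxy] using fun h => hx (hSX h))
      (Finset.subset_insert _ _)]
  exact ⟨hE.card_eq hSE, hE.card_eq hSE⟩

theorem singleChange_getLast_segment (hE : D.IsExpansionSet E) (hU0 : D.IsU0 S0)
    (hy : y ∉ D.X) {i : ℕ} (hi : i + 1 < b) :
    ∀ A ∈ (D.B i :: D.gapBlocks E S0 x y (i + 1)).getLast?, SingleChange k A (D.B (i + 1)) := by
  rcases gapBlocks_eq (x := x) (y := y) (hE.injOn_gap hU0) (i + 1) with h | ⟨S, hS, hgap, h⟩ <;>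
    simp only [h, List.getLast?_singleton, List.getLast?_cons_cons, Option.mem_def,
      Option.some.injEq, forall_eq']
  · exact D.singleChange i hi
  · have hSB : S ⊆ D.B (i + 1) := eq_inter_of_gap_eq_succ hgap hi ▸ Finset.inter_subset_right
    rw [SingleChange, Finset.insert_inter_of_subset (fun h => hy (D.subX _ hi h)) hSB,
      hE.card_eq (Finset.mem_of_mem_erase hS)]

theorem isChain_front (hE : D.IsExpansionSet E) (hS0 : S0 ∈ E) (hU0 : D.IsU0 S0)
    (hx : x ∉ D.X) (hy : y ∉ D.X) (hxy : x ≠ y) (hz : z ∈ S0) :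
    (D.gapBlocks E S0 x y 0 ++ [insert y S0, insert x (insert y (S0.erase z)), insert x S0]).IsChain
      (SingleChange k) := by
  have hk := hE.two_le ⟨S0, hS0⟩
  have hS0X := hE.subset_X hS0
  have hS0c := hE.card_eq hS0
  have hzc : (S0.erase z).card = k - 2 := by
    rw [Finset.card_erase_of_mem hz, hS0c]
    omega
  have htriple : [insert y S0, insert x (insert y (S0.erase z)), insert x S0].IsChain
      (SingleChange k) := by
    rw [List.isChain_cons_cons, List.isChain_pair, SingleChange, SingleChange,
      Finset.inter_insert_of_notMem (by simpa [hxy] using fun h => hx (hS0X h)),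
      ← Finset.insert_inter_distrib, Finset.inter_eq_right.mpr (Finset.erase_subset z S0),
      ← Finset.insert_inter_distrib, Finset.insert_inter_of_notMem fun h => hy (hS0X h),
      Finset.inter_eq_left.mpr (Finset.erase_subset z S0),
      Finset.card_insert_of_notMem fun h => hy (hS0X (Finset.mem_of_mem_erase h)),
      Finset.card_insert_of_notMem fun h => hx (hS0X (Finset.mem_of_mem_erase h)), hzc]
    omega
  rcases gapBlocks_eq (x := x) (y := y) (hE.injOn_gap hU0) 0 with h | ⟨S, hS, hgap, h⟩
  · rwa [h, List.nil_append]
  obtain ⟨hSS0, hSE⟩ := Finset.mem_erase.mp hS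
  have hdisj : Disjoint S S0 := hE.disjoint hSE hS0 hSS0
  rw [h]
  refine List.IsChain.append ?_ htriple ?_
  · rw [List.isChain_pair, SingleChange, Finset.insert_inter_of_subset
      (by simpa [hxy] using fun h => hx (hE.subset_X hSE h)) (Finset.subset_insert _ _),
      hE.card_eq hSE]
  simp only [List.getLast?_cons_cons, List.getLast?_singleton, List.head?_cons, Option.mem_def,
    Option.some.injEq, forall_eq']
  -- `S` and `S0` are disjoint `(k-1)`-subsets of `B 0`, so `k = 2` and the splices meet in `{y}`.
  have hk2 : k = 2 := by
    have := Finset.card_le_card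
      (Finset.union_subset ((hE.isUnchanged hSE).subset_of_gap_eq_zero hgap) hU0.2.1)
    rw [Finset.card_union_of_disjoint hdisj, hE.card_eq hSE, hS0c, D.cardB 0 hU0.1] at this
    omega
  rw [SingleChange, ← Finset.insert_inter_distrib, Finset.disjoint_iff_inter_eq_empty.mp hdisj, hk2]
  rfl

theorem isChain_expandedBlocks (hE : D.IsExpansionSet E) (hS0 : S0 ∈ E) (hU0 : D.IsU0 S0)
    (hx : x ∉ D.X) (hy : y ∉ D.X) (hxy : x ≠ y) (hz : z ∈ S0) :
    (D.expandedBlocks E S0 x y z).IsChain (SingleChange k) := by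
  have hS0c := hE.card_eq hS0
  refine (isChain_front hE hS0 hU0 hx hy hxy hz).append
    (List.isChain_flatMap_range (fun i _ => List.cons_ne_nil _ _)
      (fun i hi => isChain_segment hE hU0 hx hxy hi) fun i hi => ?_) ?_
  · simpa using singleChange_getLast_segment hE hU0 hy hi
  obtain ⟨c, hc⟩ : ∃ c, b = c + 1 := ⟨b - 1, by have := hU0.1; omega⟩
  simp only [hc, List.range_succ_eq_map, List.flatMap_cons, List.head?_cons, List.cons_append,
    List.getLast?_append, List.getLast?_cons_cons, List.getLast?_singleton, Option.some_or,
    Option.mem_def, Option.some.injEq, forall_eq']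
  rw [SingleChange, Finset.insert_inter_of_subset (fun h => hx (D.subX 0 hU0.1 h)) hU0.2.1, hS0c]

theorem exists_mem_expandedBlocks (hE : D.IsExpansionSet E) (hS0 : S0 ∈ E) {p q : ℕ}
    (hp : p ∈ insert x (insert y D.X)) (hq : q ∈ insert x (insert y D.X)) (hpq : p ≠ q) :
    ∃ C ∈ D.expandedBlocks E S0 x y z, p ∈ C ∧ q ∈ C := by
  have hnew : ∀ q ∈ D.X, (∃ C ∈ D.expandedBlocks E S0 x y z, x ∈ C ∧ q ∈ C) ∧
      ∃ C ∈ D.expandedBlocks E S0 x y z, y ∈ C ∧ q ∈ C := by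
    intro q hq
    obtain ⟨S, hS, hqS⟩ := hE.exists_mem_of_mem_X hq
    have hmem := insert_mem_expandedBlocks (D := D) (x := x) (y := y) (z := z) hS0 hS
    exact ⟨⟨_, hmem.1, Finset.mem_insert_self _ _, Finset.mem_insert_of_mem hqS⟩,
      ⟨_, hmem.2, Finset.mem_insert_self _ _, Finset.mem_insert_of_mem hqS⟩⟩
  have hxy : ∃ C ∈ D.expandedBlocks E S0 x y z, x ∈ C ∧ y ∈ C :=
    ⟨insert x (insert y (S0.erase z)), by simp [expandedBlocks], Finset.mem_insert_self _ _,
      Finset.mem_insert_of_mem (Finset.mem_insert_self _ _)⟩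
  have hswap : ∀ {p q}, (∃ C ∈ D.expandedBlocks E S0 x y z, p ∈ C ∧ q ∈ C) →
      ∃ C ∈ D.expandedBlocks E S0 x y z, q ∈ C ∧ p ∈ C :=
    fun ⟨C, hC, hpC, hqC⟩ => ⟨C, hC, hqC, hpC⟩
  simp only [Finset.mem_insert] at hp hq
  rcases hp with rfl | rfl | hp <;> rcases hq with rfl | rfl | hq
  · exact absurd rfl hpq
  · exact hxy
  · exact (hnew q hq).1
  · exact hswap hxy
  · exact absurd rfl hpq
  · exact (hnew q hq).2
  · exact hswap (hnew p hp).1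
  · exact hswap (hnew p hp).2
  · obtain ⟨i, hi, hpi, hqi⟩ := D.covers p hp q hq hpq
    exact ⟨D.B i, List.mem_append_right _
      (List.mem_flatMap.mpr ⟨i, List.mem_range.mpr hi, List.mem_cons_self⟩), hpi, hqi⟩

theorem IsExpansionSet.nonempty_of_isU0 (hE : D.IsExpansionSet E) (hS0 : S0 ∈ E)
    (hU0 : D.IsU0 S0) : Nonempty (SCCD (v + 2) k (b + 2 * (v / (k - 1)) + 1)) := by
  obtain ⟨x, hx⟩ := Infinite.exists_notMem_finset D.X
  obtain ⟨y, hy⟩ := Infinite.exists_notMem_finset (insert x D.X)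
  obtain ⟨hyx, hy⟩ : y ≠ x ∧ y ∉ D.X := by simpa using hy
  obtain ⟨z, hz⟩ : S0.Nonempty := by
    rw [← Finset.card_pos, hE.card_eq hS0]
    have := hE.two_le ⟨S0, hS0⟩
    omega
  refine nonempty_of_isChain (insert x (insert y D.X)) (D.expandedBlocks E S0 x y z) ?_
    (length_expandedBlocks hE hS0)
    (fun C hC => card_eq_and_subset_of_mem_expandedBlocks hE hS0 hx hy hyx.symm hz hC)
    (isChain_expandedBlocks hE hS0 hU0 hx hy hyx.symm hz)
    (fun p hp q hq hpq => exists_mem_expandedBlocks hE hS0 hp hq hpq)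
  rw [Finset.card_insert_of_notMem (by simpa [hyx.symm] using hx),
    Finset.card_insert_of_notMem hy, D.cardX]

end SCCD

/-- From a tight `SCCD(v,k,b)` with an outer expansion set, one
obtains an economical `SCCD(v+2, k, b + 2v/(k−1) + 1)`. -/
theorem stmt9 (v k b : ℕ) (D : SCCD v k b) (hD : TightLin v k b)
    (E : Finset (Finset ℕ)) (hE : D.IsOuterExpansionSet E) :
    Nonempty (SCCD (v + 2) k (b + 2 * (v / (k - 1)) + 1)) ∧
      EconomicalLin (v + 2) k (b + 2 * (v / (k - 1)) + 1) := by
  obtain ⟨hexp, houter⟩ := hE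
  have hne : E.Nonempty := by
    rcases houter with ⟨S, hS, -⟩ | ⟨S, hS, -⟩ <;> exact ⟨S, hS⟩
  refine ⟨?_, economicalLin_of_tightLin (hexp.two_le hne) (Dvd.intro_left _ hexp.card_X.symm) hD⟩
  rcases houter with ⟨S, hS, hU0⟩ | ⟨S, hS, hUb⟩
  · exact hexp.nonempty_of_isU0 hS hU0
  · exact hexp.reverse.nonempty_of_isU0 hS hUb.isU0_reverse
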